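/- arXiv:2505.15568 — 6 statements merged into one kernel-verified Lean document; each statement's English description precedes it below -/
import Mathlib

section
/- Generalized time-skip theorem (safety part): suppose Assumptions 1, 2, 3 and 4 hold and the index type 𝒳 of clocks is finite. Then the original real-time system refines the time-optimized system on non-clock components: for every behavior σ : ℕ → states with σ 0 ∈ Init such that for every i the pair (σ i, σ (i+1)) is a NextI step, an AdvanceTime_S step, or a stuttering step, there exists a behavior τ : ℕ → states with τ 0 ∈ Init such that for every i the pair (τ i, τ (i+1)) is a NextI step, an AdvanceTime_Ŝ step, or a stuttering step, and core (τ i) = core (σ i) for every i. -/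
/-!
The simulating behavior keeps the cores of `σ` and replaces its clocks by the mapped clocks `m`
of the extended system: on a time step, `m^x` jumps to the largest point of `relETP^x` not beyond
the new value of clock `x`. Points of `relETP^x` below the current clock persist along `σ`
(Assumption 4 for internal steps, Assumption 3 for time steps), so every such point is `≤ m^x`.
Hence a time step of `σ` either leaves `m` unchanged, a stutter, or moves some mapped clocks onto
points of `relETP` without overtaking a time bound, an `AdvanceTime_Ŝ` step. An internal step
survives lowering each clock `x` from `s.x` to `m^x` one unit at a time: a unit that broke it would
exhibit a point of `ETP^x` in `(m^x, s.x]`, and that point lies in `relETP^x` by Assumption 2.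
-/

open scoped Classical

universe u v

/-- A state of an explicit real-time system: a non-clock component and the clock values. -/
structure RTState (α : Type u) (𝒳 : Type v) where
  core : α
  clk : 𝒳 → ℕ

/-- An extended state: an underlying state together with the mapped-clock values. -/
structure RTEState (α : Type u) (𝒳 : Type v) where
  st : RTState α 𝒳
  m : 𝒳 → ℕ

namespace RT

variable {α : Type u} {𝒳 : Type v}

/-- `T x d s`: the state agreeing with `s` except that clock `x` has value `d`. -/
noncomputable def T (x : 𝒳) (d : ℕ) (s : RTState α 𝒳) : RTState α 𝒳 :=
  ⟨s.core, fun y => if y = x then d else s.clk y⟩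

/-- `𝒯^x_d` applied pointwise to a behavior. -/
noncomputable def Tb (x : 𝒳) (d : ℕ) (σ : ℕ → RTState α 𝒳) : ℕ → RTState α 𝒳 :=
  fun i => T x d (σ i)

/-- `N_S`: behaviors each of whose steps is a `NextI` step or a stuttering step. -/
def NS (NextI : RTState α 𝒳 → RTState α 𝒳 → Prop) : Set (ℕ → RTState α 𝒳) :=
  { σ | ∀ i, NextI (σ i) (σ (i + 1)) ∨ σ (i + 1) = σ i }

/-- `AdvanceTime_S`: all clocks advance by one, provided no time bound is hit. -/
def AdvanceTimeS (B : 𝒳 → RTState α 𝒳 → Set ℕ) (s t : RTState α 𝒳) : Prop :=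
  t.core = s.core ∧ (∀ x, t.clk x = s.clk x + 1) ∧ ∀ x, s.clk x ∉ B x s

/-- `ETP^x(s)`: points in time at which a newly possible behavior for state `s` exists. -/
def ETP (NextI : RTState α 𝒳 → RTState α 𝒳 → Prop) (x : 𝒳) (s : RTState α 𝒳) :
    Set ℕ :=
  { t | 1 ≤ t ∧ ∃ σ ∈ NS NextI, σ 0 = T x t s ∧ Tb x (t - 1) σ ∉ NS NextI }

/-- `AdvanceTime_Ŝ`: the time-optimized advance-time action. -/
def AdvanceTimeHat (B relETP : 𝒳 → RTState α 𝒳 → Set ℕ) (s t : RTState α 𝒳) : Prop :=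
  t.core = s.core ∧ (∃ x, s.clk x < t.clk x) ∧
    (∀ x, t.clk x = s.clk x ∨ (s.clk x < t.clk x ∧ t.clk x ∈ relETP x s)) ∧
    ∀ x, ∀ b ∈ B x s, s.clk x ≤ b → t.clk x ≤ b

/-- `Init'`: initial extended states, with mapped clocks equal to the clocks. -/
def EInit (Init : Set (RTState α 𝒳)) : Set (RTEState α 𝒳) :=
  { s' | s'.st ∈ Init ∧ ∀ x, s'.m x = s'.st.clk x }

/-- `NextI'`: internal step of the extended system, mapped clocks unchanged. -/
def ENextI (NextI : RTState α 𝒳 → RTState α 𝒳 → Prop) (s' t' : RTEState α 𝒳) : Prop :=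
  NextI s'.st t'.st ∧ ∀ x, t'.m x = s'.m x

/-- `AdvanceTime'`: extended advance-time step, updating the mapped clocks. -/
def EAdvanceTime (B relETP : 𝒳 → RTState α 𝒳 → Set ℕ) (s' t' : RTEState α 𝒳) : Prop :=
  AdvanceTimeS B s'.st t'.st ∧
    ∀ x, t'.m x = sSup ({s'.m x} ∪ { n ∈ relETP x s'.st | n ≤ t'.st.clk x })

/-- `T'^x_d`: set clock `x` of the underlying state to `d`; mapped clocks unchanged. -/
noncomputable def ET (x : 𝒳) (d : ℕ) (s' : RTEState α 𝒳) : RTEState α 𝒳 :=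
  ⟨T x d s'.st, s'.m⟩

/-- `𝒯'^x_d` applied pointwise to a behavior of extended states. -/
noncomputable def ETb (x : 𝒳) (d : ℕ) (σ : ℕ → RTEState α 𝒳) : ℕ → RTEState α 𝒳 :=
  fun i => ET x d (σ i)

/-- `N_{S'}`: extended behaviors in which every step is a `NextI'` step or stuttering. -/
def ENS (NextI : RTState α 𝒳 → RTState α 𝒳 → Prop) : Set (ℕ → RTEState α 𝒳) :=
  { σ | ∀ i, ENextI NextI (σ i) (σ (i + 1)) ∨ σ (i + 1) = σ i }

/-- `n^x(s')`, an element of `ℕ∞` (`sInf ∅ = ⊤`), with truncated subtraction on `ℕ`. -/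
noncomputable def nfun (NextI : RTState α 𝒳 → RTState α 𝒳 → Prop) (x : 𝒳)
    (s' : RTEState α 𝒳) : ℕ∞ :=
  sInf ((fun n : ℕ => (n : ℕ∞)) ''
    { n : ℕ | ∃ σ ∈ ENS NextI, σ 0 = ET x (s'.st.clk x - n) s' ∧
        ETb x (s'.st.clk x - n - 1) σ ∉ ENS NextI })

/-- The invariant `Inv`: `s'.x ≤ s'.m^x + n^x(s')` in `ℕ∞` for every clock `x`. -/
def Inv (NextI : RTState α 𝒳 → RTState α 𝒳 → Prop) (s' : RTEState α 𝒳) : Prop :=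
  ∀ x, (s'.st.clk x : ℕ∞) ≤ (s'.m x : ℕ∞) + nfun NextI x s'

/-- `bar(s')`: the state with the core of `st s'` and every clock set to its mapped value. -/
def bar (s' : RTEState α 𝒳) : RTState α 𝒳 :=
  ⟨s'.st.core, s'.m⟩

/-- A step of the extended system: `NextI'`, `AdvanceTime'`, or stuttering. -/
def EStep (NextI : RTState α 𝒳 → RTState α 𝒳 → Prop)
    (B relETP : 𝒳 → RTState α 𝒳 → Set ℕ) (s' t' : RTEState α 𝒳) : Prop :=
  ENextI NextI s' t' ∨ EAdvanceTime B relETP s' t' ∨ t' = s'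

/-- An extended state is reachable iff it arises from `Init'` by finitely many steps. -/
def EReachable (Init : Set (RTState α 𝒳)) (NextI : RTState α 𝒳 → RTState α 𝒳 → Prop)
    (B relETP : 𝒳 → RTState α 𝒳 → Set ℕ) (s' : RTEState α 𝒳) : Prop :=
  ∃ i ∈ EInit Init, Relation.ReflTransGen (EStep NextI B relETP) i s'

/-- Replace the values of the clocks in the set `Y` by their mapped-clock values. -/
noncomputable def replaceClocks (Y : Set 𝒳) (s' : RTEState α 𝒳) : RTEState α 𝒳 :=
  ⟨⟨s'.st.core, fun x => if x ∈ Y then s'.m x else s'.st.clk x⟩, s'.m⟩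

end RT

namespace RT

variable {α : Type u} {𝒳 : Type v}

section ClockUpdate

@[simp]
lemma T_T (x : 𝒳) (d d' : ℕ) (s : RTState α 𝒳) : T x d (T x d' s) = T x d s := by
  simp only [T]
  congr 1
  funext y
  split_ifs <;> rfl

@[simp]
lemma T_clk_self (x : 𝒳) (s : RTState α 𝒳) : T x (s.clk x) s = s := by
  obtain ⟨c, k⟩ := s
  simp only [T]
  congr 1
  funext y
  split_ifs with h <;> simp [h]

lemma T_eq_update (x : 𝒳) (d : ℕ) (s : RTState α 𝒳) :
    T x d s = ⟨s.core, Function.update s.clk x d⟩ := by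
  simp only [T]
  congr 1
  funext y
  simp [Function.update_apply]

end ClockUpdate

section Lowering

variable (NextI : RTState α 𝒳 → RTState α 𝒳 → Prop)

/-- If lowering clock `x` by one breaks a core-changing `NextI` step, the two-step behavior
through that step witnesses `e + 1 ∈ ETP x s`. -/
lemma nextI_T_of_succ_notMem_ETP {s t : RTState α 𝒳} {x : 𝒳} {e : ℕ}
    (h : NextI (T x (e + 1) s) (T x (e + 1) t)) (hcore : s.core ≠ t.core)
    (he : e + 1 ∉ ETP NextI x s) : NextI (T x e s) (T x e t) := by
  by_contra hlow
  refine he ⟨Nat.le_add_left 1 e, fun i => T x (e + 1) (if i = 0 then s else t), ?_, rfl, ?_⟩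
  · rintro (_ | i)
    · exact Or.inl h
    · exact Or.inr rfl
  · intro hNS
    rcases hNS 0 with hstep | heq
    · exact hlow (by simpa [Tb] using hstep)
    · exact hcore (congrArg RTState.core heq).symm

lemma nextI_T_of_forall_notMem_ETP {s t : RTState α 𝒳} {x : 𝒳} {m : ℕ} (h : NextI s t)
    (hcore : s.core ≠ t.core) (hclk : t.clk x = s.clk x) (hm : m ≤ s.clk x)
    (hE : ∀ e, m < e → e ≤ s.clk x → e ∉ ETP NextI x s) : NextI (T x m s) (T x m t) := by
  obtain ⟨k, hk⟩ := Nat.exists_eq_add_of_le hm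
  induction k generalizing m with
  | zero =>
    have hs : T x m s = s := by simpa [hk] using T_clk_self x s
    have ht : T x m t = t := by simpa [hclk, hk] using T_clk_self x t
    rwa [hs, ht]
  | succ k ih =>
    have hlow := ih (m := m + 1) (by omega) (fun e he => hE e (by omega)) (by omega)
    exact nextI_T_of_succ_notMem_ETP NextI hlow hcore (hE (m + 1) (by omega) (by omega))

/-- `hE` is asked of every state with the core of `s` because the clocks are lowered one at a
time, through intermediate states. -/
lemma nextI_lower_clocks [Finite 𝒳] {s t : RTState α 𝒳} (h : NextI s t)
    (hcore : s.core ≠ t.core) (hclk : t.clk = s.clk) (c : 𝒳 → ℕ) (hc : c ≤ s.clk)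
    (hE : ∀ x (s' : RTState α 𝒳), s'.core = s.core →
      ∀ e, c x < e → e ≤ s.clk x → e ∉ ETP NextI x s') :
    NextI ⟨s.core, c⟩ ⟨t.core, c⟩ := by
  have : Fintype 𝒳 := Fintype.ofFinite 𝒳
  suffices ∀ Y : Finset 𝒳, NextI ⟨s.core, Y.piecewise c s.clk⟩ ⟨t.core, Y.piecewise c t.clk⟩ by
    simpa using this Finset.univ
  intro Y
  induction Y using Finset.induction_on with
  | empty => simpa using h
  | insert x Y hx ih =>
    have hsx : (Y.piecewise c s.clk) x = s.clk x := Finset.piecewise_eq_of_notMem _ _ _ hx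
    have hlow := nextI_T_of_forall_notMem_ETP NextI (x := x) (m := c x) ih hcore
      (by simp [hclk]) (by simpa [hsx] using hc x)
      (fun e he1 he2 => hE x ⟨s.core, Y.piecewise c s.clk⟩ rfl e he1 (by simpa [hsx] using he2))
    simpa only [T_eq_update, Finset.piecewise_insert] using hlow

end Lowering

section MappedClocks

variable (relETP : 𝒳 → RTState α 𝒳 → Set ℕ) (σ : ℕ → RTState α 𝒳)

/-- The mapped clocks `m` of the extended system along `σ`. The paper updates them only on
`AdvanceTime` steps; updating on every step changes nothing (`mappedClocks_succ_of_clk_eq`). -/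
noncomputable def mappedClocks : ℕ → 𝒳 → ℕ
  | 0 => (σ 0).clk
  | i + 1 => fun x =>
    max (mappedClocks i x) (sSup {n ∈ relETP x (σ i) | n ≤ (σ (i + 1)).clk x})

variable {relETP σ}

lemma mappedClocks_succ_le {i : ℕ} {x : 𝒳} {b : ℕ} (hb : mappedClocks relETP σ i x ≤ b)
    (hσb : (σ (i + 1)).clk x ≤ b) : mappedClocks relETP σ (i + 1) x ≤ b :=
  max_le hb (csSup_le' fun _ hn => hn.2.trans hσb)

lemma mappedClocks_le_clk (hmono : ∀ i x, (σ i).clk x ≤ (σ (i + 1)).clk x) (i : ℕ) (x : 𝒳) :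
    mappedClocks relETP σ i x ≤ (σ i).clk x := by
  induction i with
  | zero => exact le_rfl
  | succ i ih => exact mappedClocks_succ_le (ih.trans (hmono i x)) le_rfl

lemma le_mappedClocks
    (hrel : ∀ i x n, n ∈ relETP x (σ (i + 1)) → n ≤ (σ (i + 1)).clk x → n ∈ relETP x (σ i))
    {i : ℕ} {x : 𝒳} {n : ℕ} (hn : n ∈ relETP x (σ i)) (hle : n ≤ (σ i).clk x) :
    n ≤ mappedClocks relETP σ i x := by
  cases i with
  | zero => exact hle
  | succ i =>
    have hmem : n ∈ {m ∈ relETP x (σ i) | m ≤ (σ (i + 1)).clk x} := ⟨hrel i x n hn hle, hle⟩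
    exact (le_csSup ⟨_, fun _ hm => hm.2⟩ hmem).trans (le_max_right _ _)

lemma mappedClocks_succ_of_clk_eq
    (hrel : ∀ i x n, n ∈ relETP x (σ (i + 1)) → n ≤ (σ (i + 1)).clk x → n ∈ relETP x (σ i))
    {i : ℕ} (hclk : (σ (i + 1)).clk = (σ i).clk) :
    mappedClocks relETP σ (i + 1) = mappedClocks relETP σ i := by
  funext x
  refine le_antisymm (max_le le_rfl (csSup_le' fun n hn => ?_)) (le_max_left _ _)
  exact le_mappedClocks hrel hn.1 (hclk ▸ hn.2)

lemma mappedClocks_succ_mem_relETP {i : ℕ} {x : 𝒳}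
    (hne : mappedClocks relETP σ (i + 1) x ≠ mappedClocks relETP σ i x) :
    mappedClocks relETP σ i x < mappedClocks relETP σ (i + 1) x ∧
      mappedClocks relETP σ (i + 1) x ∈ relETP x (σ i) := by
  set S := {n ∈ relETP x (σ i) | n ≤ (σ (i + 1)).clk x}
  have hlt : mappedClocks relETP σ i x < sSup S := lt_of_not_ge fun h => hne (max_eq_left h)
  have hS : S.Nonempty := by
    by_contra hS
    simp [Set.not_nonempty_iff_eq_empty.mp hS] at hlt
  have hsucc : mappedClocks relETP σ (i + 1) x = sSup S := max_eq_right hlt.le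
  rw [hsucc]
  exact ⟨hlt, (Nat.sSup_mem hS ⟨_, fun _ hm => hm.2⟩).1⟩

end MappedClocks

section MappedBehavior

variable {NextI : RTState α 𝒳 → RTState α 𝒳 → Prop} {B relETP : 𝒳 → RTState α 𝒳 → Set ℕ}

lemma clk_le_of_step (hClk : ∀ s t, NextI s t → ∀ x, t.clk x = s.clk x) {s t : RTState α 𝒳}
    (h : NextI s t ∨ AdvanceTimeS B s t ∨ t = s) (x : 𝒳) : s.clk x ≤ t.clk x := by
  rcases h with h | h | rfl
  · exact (hClk _ _ h x).ge
  · exact (h.2.1 x).symm ▸ Nat.le_succ _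
  · exact le_rfl

lemma mem_relETP_of_step
    (hA4 : ∀ s t, NextI s t → ∀ (x : 𝒳), ∀ n ∈ relETP x t, n ≤ t.clk x → n ∈ relETP x s)
    (hR : ∀ x (s t : RTState α 𝒳), s.core = t.core → relETP x s = relETP x t)
    {s t : RTState α 𝒳} (h : NextI s t ∨ AdvanceTimeS B s t ∨ t = s) {x : 𝒳} {n : ℕ}
    (hn : n ∈ relETP x t) (hle : n ≤ t.clk x) : n ∈ relETP x s := by
  rcases h with h | h | rfl
  · exact hA4 _ _ h x n hn hle
  · rwa [hR x _ _ h.1] at hn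
  · exact hn

variable {σ : ℕ → RTState α 𝒳}

lemma nextI_mappedClocks [Finite 𝒳] (hETP : ∀ x s, ETP NextI x s ⊆ relETP x s)
    (hR : ∀ x (s t : RTState α 𝒳), s.core = t.core → relETP x s = relETP x t)
    (hmono : ∀ i x, (σ i).clk x ≤ (σ (i + 1)).clk x)
    (hrel : ∀ i x n, n ∈ relETP x (σ (i + 1)) → n ≤ (σ (i + 1)).clk x → n ∈ relETP x (σ i))
    {i : ℕ} (h : NextI (σ i) (σ (i + 1))) (hcore : (σ i).core ≠ (σ (i + 1)).core)
    (hclk : (σ (i + 1)).clk = (σ i).clk) :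
    NextI ⟨(σ i).core, mappedClocks relETP σ i⟩
      ⟨(σ (i + 1)).core, mappedClocks relETP σ (i + 1)⟩ := by
  rw [mappedClocks_succ_of_clk_eq hrel hclk]
  refine nextI_lower_clocks NextI h hcore hclk _ (mappedClocks_le_clk hmono i) ?_
  intro x s' hs' e he hle hmem
  have he' : e ∈ relETP x (σ i) := hR x s' (σ i) hs' ▸ hETP x s' hmem
  exact (le_mappedClocks hrel he' hle).not_gt he

lemma advanceTimeHat_mappedClocks
    (hBR : ∀ x (s : RTState α 𝒳), { n | ∃ b ∈ B x s, n = b + 1 } ⊆ relETP x s)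
    (hA3 : ∀ x (s t : RTState α 𝒳), s.core = t.core → B x s = B x t ∧ relETP x s = relETP x t)
    (hrel : ∀ i x n, n ∈ relETP x (σ (i + 1)) → n ≤ (σ (i + 1)).clk x → n ∈ relETP x (σ i))
    {i : ℕ} (h : AdvanceTimeS B (σ i) (σ (i + 1)))
    (hne : mappedClocks relETP σ (i + 1) ≠ mappedClocks relETP σ i) :
    AdvanceTimeHat B relETP ⟨(σ i).core, mappedClocks relETP σ i⟩
      ⟨(σ (i + 1)).core, mappedClocks relETP σ (i + 1)⟩ := by
  have hτ x := hA3 x ⟨(σ i).core, mappedClocks relETP σ i⟩ (σ i) rfl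
  obtain ⟨x₀, hx₀⟩ := Function.ne_iff.mp hne
  refine ⟨h.1, ⟨x₀, (mappedClocks_succ_mem_relETP hx₀).1⟩, fun x => ?_, fun x b hb hμb => ?_⟩
  · by_cases hx : mappedClocks relETP σ (i + 1) x = mappedClocks relETP σ i x
    · exact Or.inl hx
    · rw [(hτ x).2]
      exact Or.inr (mappedClocks_succ_mem_relETP hx)
  · rw [(hτ x).1] at hb
    change mappedClocks relETP σ i x ≤ b at hμb
    -- `b + 1 ∈ relETP`, so a clock already past `b` would have pushed the mapped clock past `b`.
    have hlt : (σ i).clk x < b := by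
      rcases lt_trichotomy ((σ i).clk x) b with hlt | heq | hgt
      · exact hlt
      · exact absurd (heq ▸ hb) (h.2.2 x)
      · have := le_mappedClocks hrel (hBR x (σ i) ⟨b, hb, rfl⟩) hgt
        omega
    exact mappedClocks_succ_le hμb (by rw [h.2.1 x]; omega)

end MappedBehavior

end RT

theorem generalized_time_skip_safety_general {α : Type u} {𝒳 : Type v} [Finite 𝒳]
    (Init : Set (RTState α 𝒳)) (NextI : RTState α 𝒳 → RTState α 𝒳 → Prop)
    (B relETP : 𝒳 → RTState α 𝒳 → Set ℕ)
    (hClk : ∀ s t, NextI s t → ∀ x, t.clk x = s.clk x)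
    (hA2 : ∀ (x : 𝒳) (s : RTState α 𝒳), RT.ETP NextI x s ⊆ relETP x s ∧
      { n | ∃ b ∈ B x s, n = b + 1 } ⊆ relETP x s)
    (hA3 : ∀ (x : 𝒳) (s t : RTState α 𝒳), s.core = t.core →
      B x s = B x t ∧ relETP x s = relETP x t)
    (hA4 : ∀ s t, NextI s t → ∀ (x : 𝒳), ∀ n ∈ relETP x t, n ≤ t.clk x → n ∈ relETP x s)
    (σ : ℕ → RTState α 𝒳) (hI : σ 0 ∈ Init)
    (hσ : ∀ i, NextI (σ i) (σ (i + 1)) ∨ RT.AdvanceTimeS B (σ i) (σ (i + 1)) ∨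
      σ (i + 1) = σ i) :
    ∃ τ : ℕ → RTState α 𝒳, τ 0 ∈ Init ∧
      (∀ i, NextI (τ i) (τ (i + 1)) ∨ RT.AdvanceTimeHat B relETP (τ i) (τ (i + 1)) ∨
        τ (i + 1) = τ i) ∧
      ∀ i, (τ i).core = (σ i).core := by
  have hR x s t (h : s.core = t.core) : relETP x s = relETP x t := (hA3 x s t h).2
  have hmono i := RT.clk_le_of_step hClk (hσ i)
  have hrel i x n (hn : n ∈ relETP x (σ (i + 1))) := RT.mem_relETP_of_step hA4 hR (hσ i) hn
  refine ⟨fun i => ⟨(σ i).core, RT.mappedClocks relETP σ i⟩, hI, fun i => ?_, fun i => rfl⟩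
  rcases hσ i with h | h | h
  · have hclk := funext (hClk _ _ h)
    by_cases hcore : (σ i).core = (σ (i + 1)).core
    · simp only [← hcore, RT.mappedClocks_succ_of_clk_eq hrel hclk, or_true]
    · exact Or.inl (RT.nextI_mappedClocks (fun x s => (hA2 x s).1) hR hmono hrel h hcore hclk)
  · by_cases hμ : RT.mappedClocks relETP σ (i + 1) = RT.mappedClocks relETP σ i
    · simp only [h.1, hμ, or_true]
    · exact Or.inr (Or.inl
        (RT.advanceTimeHat_mappedClocks (fun x s => (hA2 x s).2) hA3 hrel h hμ))
  · simp only [h, RT.mappedClocks_succ_of_clk_eq hrel (congrArg RTState.clk h), or_true]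

theorem generalized_time_skip_safety {α : Type u} {𝒳 : Type v} [Finite 𝒳]
    (Init : Set (RTState α 𝒳)) (NextI : RTState α 𝒳 → RTState α 𝒳 → Prop)
    (B relETP : 𝒳 → RTState α 𝒳 → Set ℕ)
    (hClk : ∀ s t, NextI s t → ∀ x, t.clk x = s.clk x)
    (hA1 : ∀ (x : 𝒳) (d : ℕ) (s : RTState α 𝒳), B x (RT.T x d s) = B x s)
    (hA2 : ∀ (x : 𝒳) (s : RTState α 𝒳), RT.ETP NextI x s ⊆ relETP x s ∧
      { n | ∃ b ∈ B x s, n = b + 1 } ⊆ relETP x s)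
    (hA3 : ∀ (x : 𝒳) (s t : RTState α 𝒳), s.core = t.core →
      B x s = B x t ∧ relETP x s = relETP x t)
    (hA4 : ∀ s t, NextI s t → ∀ (x : 𝒳), ∀ n ∈ relETP x t, n ≤ t.clk x → n ∈ relETP x s)
    (σ : ℕ → RTState α 𝒳) (hI : σ 0 ∈ Init)
    (hσ : ∀ i, NextI (σ i) (σ (i + 1)) ∨ RT.AdvanceTimeS B (σ i) (σ (i + 1)) ∨
      σ (i + 1) = σ i) :
    ∃ τ : ℕ → RTState α 𝒳, τ 0 ∈ Init ∧
      (∀ i, NextI (τ i) (τ (i + 1)) ∨ RT.AdvanceTimeHat B relETP (τ i) (τ (i + 1)) ∨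
        τ (i + 1) = τ i) ∧
      ∀ i, (τ i).core = (σ i).core :=
  generalized_time_skip_safety_general Init NextI B relETP hClk hA2 hA3 hA4 σ hI hσ
end

section
/- Downward time translation of behaviors: let s' be an extended state, x a clock, and n ∈ ℕ with n < s'.x and (n : ℕ ∪ {∞}) < n^x(s'). Then every behavior σ ∈ N_{S'} with σ 0 = s' satisfies 𝒯'^x_{s'.x − n − 1}(σ) ∈ N_{S'}. -/
open scoped Classical

universe u v

/-!
The clock `x` is constant along every behavior in `N_{S'}`, so `𝒯'^x_{s'.x}` fixes a behavior
starting at `s'`. By the definition of `n^x(s')` as a minimum, every `k < n^x(s')` is a level at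
which lowering clock `x` by one more unit preserves membership in `N_{S'}`; induction on `k` lowers
the clock from `s'.x` down to `s'.x - n - 1`.
-/

namespace RT

variable {α : Type u} {𝒳 : Type v}

@[simp]
lemma ET_ET (x : 𝒳) (d e : ℕ) (s' : RTEState α 𝒳) : ET x d (ET x e s') = ET x d s' := by
  simp only [ET, T, RTEState.mk.injEq, RTState.mk.injEq, true_and, and_true]
  funext y
  split_ifs <;> rfl

@[simp]
lemma ETb_ETb (x : 𝒳) (d e : ℕ) (σ : ℕ → RTEState α 𝒳) :
    ETb x d (ETb x e σ) = ETb x d σ :=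
  funext fun _ => ET_ET ..

lemma ET_clk_self (x : 𝒳) (s' : RTEState α 𝒳) : ET x (s'.st.clk x) s' = s' := by
  simp only [ET, T]
  congr
  funext y
  split_ifs with h <;> simp only [h]

lemma ENS.clk_eq_clk_zero {NextI : RTState α 𝒳 → RTState α 𝒳 → Prop}
    (hclk : ∀ s t, NextI s t → ∀ x, t.clk x = s.clk x)
    {σ : ℕ → RTEState α 𝒳} (hσ : σ ∈ ENS NextI) (i : ℕ) :
    (σ i).st.clk = (σ 0).st.clk := by
  induction i with
  | zero => rfl
  | succ k ih =>
    rcases hσ k with hstep | hstutter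
    · exact (funext (hclk _ _ hstep.1)).trans ih
    · rwa [hstutter]

lemma ETb_clk_zero_eq_self {NextI : RTState α 𝒳 → RTState α 𝒳 → Prop}
    (hclk : ∀ s t, NextI s t → ∀ x, t.clk x = s.clk x)
    {σ : ℕ → RTEState α 𝒳} (hσ : σ ∈ ENS NextI) (x : 𝒳) :
    ETb x ((σ 0).st.clk x) σ = σ := by
  funext i
  rw [ETb, ← ENS.clk_eq_clk_zero hclk hσ i, ET_clk_self]

lemma ETb_sub_one_mem_ENS_of_lt_nfun {NextI : RTState α 𝒳 → RTState α 𝒳 → Prop} {x : 𝒳}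
    {s' : RTEState α 𝒳} {k : ℕ} (hk : (k : ℕ∞) < nfun NextI x s')
    {τ : ℕ → RTEState α 𝒳} (hτ : τ ∈ ENS NextI) (hτ0 : τ 0 = ET x (s'.st.clk x - k) s') :
    ETb x (s'.st.clk x - k - 1) τ ∈ ENS NextI := by
  by_contra hnot
  have hmin : nfun NextI x s' ≤ k := sInf_le ⟨k, ⟨τ, hτ, hτ0, hnot⟩, rfl⟩
  exact hmin.not_gt hk

lemma ETb_sub_mem_ENS_of_le_nfun {NextI : RTState α 𝒳 → RTState α 𝒳 → Prop}
    (hclk : ∀ s t, NextI s t → ∀ x, t.clk x = s.clk x)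
    {σ : ℕ → RTEState α 𝒳} (hσ : σ ∈ ENS NextI) (x : 𝒳) :
    ∀ k : ℕ, (k : ℕ∞) ≤ nfun NextI x (σ 0) → ETb x ((σ 0).st.clk x - k) σ ∈ ENS NextI
  | 0, _ => by rwa [Nat.sub_zero, ETb_clk_zero_eq_self hclk hσ]
  | k + 1, hk => by
    have hk' : (k : ℕ∞) < nfun NextI x (σ 0) := lt_of_lt_of_le (by norm_cast; omega) hk
    have hlowered := ETb_sub_mem_ENS_of_le_nfun hclk hσ x k hk'.le
    rw [← Nat.sub_sub, ← ETb_ETb x _ ((σ 0).st.clk x - k)]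
    exact ETb_sub_one_mem_ENS_of_lt_nfun hk' hlowered rfl

end RT

theorem downward_time_translation_general {α : Type u} {𝒳 : Type v}
    (NextI : RTState α 𝒳 → RTState α 𝒳 → Prop)
    (hClk : ∀ s t, NextI s t → ∀ x, t.clk x = s.clk x)
    (s' : RTEState α 𝒳) (x : 𝒳) (n : ℕ)
    (h2 : (n : ℕ∞) < RT.nfun NextI x s') :
    ∀ σ ∈ RT.ENS NextI, σ 0 = s' →
      RT.ETb x (s'.st.clk x - n - 1) σ ∈ RT.ENS NextI := by
  rintro σ hσ rfl
  rw [Nat.sub_sub]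
  exact RT.ETb_sub_mem_ENS_of_le_nfun hClk hσ x (n + 1) (Order.add_one_le_of_lt h2)

theorem downward_time_translation {α : Type u} {𝒳 : Type v}
    (NextI : RTState α 𝒳 → RTState α 𝒳 → Prop)
    (hClk : ∀ s t, NextI s t → ∀ x, t.clk x = s.clk x)
    (s' : RTEState α 𝒳) (x : 𝒳) (n : ℕ)
    (h1 : n < s'.st.clk x) (h2 : (n : ℕ∞) < RT.nfun NextI x s') :
    ∀ σ ∈ RT.ENS NextI, σ 0 = s' →
      RT.ETb x (s'.st.clk x - n - 1) σ ∈ RT.ENS NextI :=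
  downward_time_translation_general NextI hClk s' x n h2
end

section
/- Correspondence of newly possible behaviors between the base and extended systems: for every extended state s', every clock x, and every d ∈ ℕ with d ≥ 1, there exists a behavior σ ∈ N_S with σ 0 = T^x_d(st s') and 𝒯^x_{d−1}(σ) ∉ N_S if and only if there exists a behavior σ' ∈ N_{S'} with σ' 0 = T'^x_d(s') and 𝒯'^x_{d−1}(σ') ∉ N_{S'}. -/
open scoped Classical

universe u v

/-! Internal steps of the extended system never change the mapped clocks, so its behaviors are
exactly base behaviors paired with constant mapped clocks, and `𝒯'` acts on the base component
alone. -/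

namespace RT

variable {α : Type u} {𝒳 : Type v} {NextI : RTState α 𝒳 → RTState α 𝒳 → Prop}

def liftBehavior (m : 𝒳 → ℕ) (σ : ℕ → RTState α 𝒳) : ℕ → RTEState α 𝒳 :=
  fun i => ⟨σ i, m⟩

@[simp]
theorem liftBehavior_mem_ENS_iff {m : 𝒳 → ℕ} {σ : ℕ → RTState α 𝒳} :
    liftBehavior m σ ∈ ENS NextI ↔ σ ∈ NS NextI := by
  simp [liftBehavior, ENS, NS, ENextI]

theorem ETb_liftBehavior (x : 𝒳) (d : ℕ) (m : 𝒳 → ℕ) (σ : ℕ → RTState α 𝒳) :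
    ETb x d (liftBehavior m σ) = liftBehavior m (Tb x d σ) :=
  rfl

theorem m_eq_m_zero_of_mem_ENS {σ' : ℕ → RTEState α 𝒳} (hσ' : σ' ∈ ENS NextI) (i : ℕ) :
    (σ' i).m = (σ' 0).m := by
  induction i with
  | zero => rfl
  | succ i ih =>
    rcases hσ' i with ⟨-, hm⟩ | hstutter
    · exact (funext hm).trans ih
    · rw [hstutter, ih]

theorem eq_liftBehavior_of_mem_ENS {σ' : ℕ → RTEState α 𝒳} (hσ' : σ' ∈ ENS NextI) :
    σ' = liftBehavior (σ' 0).m (fun i => (σ' i).st) :=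
  funext fun i => congrArg (RTEState.mk _) (m_eq_m_zero_of_mem_ENS hσ' i)

end RT

theorem newly_possible_behaviors_correspondence_general {α : Type u} {𝒳 : Type v}
    (NextI : RTState α 𝒳 → RTState α 𝒳 → Prop)
    (s' : RTEState α 𝒳) (x : 𝒳) (d : ℕ) :
    (∃ σ ∈ RT.NS NextI, σ 0 = RT.T x d s'.st ∧ RT.Tb x (d - 1) σ ∉ RT.NS NextI) ↔
      (∃ σ' ∈ RT.ENS NextI, σ' 0 = RT.ET x d s' ∧
        RT.ETb x (d - 1) σ' ∉ RT.ENS NextI) := by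
  constructor
  · rintro ⟨σ, hσ, h0, hnew⟩
    refine ⟨RT.liftBehavior s'.m σ, RT.liftBehavior_mem_ENS_iff.2 hσ,
      congrArg (RTEState.mk · s'.m) h0, ?_⟩
    rwa [RT.ETb_liftBehavior, RT.liftBehavior_mem_ENS_iff]
  · rintro ⟨σ', hσ', h0, hnew⟩
    rw [RT.eq_liftBehavior_of_mem_ENS hσ', RT.ETb_liftBehavior,
      RT.liftBehavior_mem_ENS_iff] at hnew
    refine ⟨fun i => (σ' i).st, ?_, congrArg RTEState.st h0, hnew⟩
    rwa [RT.eq_liftBehavior_of_mem_ENS hσ', RT.liftBehavior_mem_ENS_iff] at hσ'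

theorem newly_possible_behaviors_correspondence {α : Type u} {𝒳 : Type v}
    (NextI : RTState α 𝒳 → RTState α 𝒳 → Prop)
    (hClk : ∀ s t, NextI s t → ∀ x, t.clk x = s.clk x)
    (s' : RTEState α 𝒳) (x : 𝒳) (d : ℕ) (hd : 1 ≤ d) :
    (∃ σ ∈ RT.NS NextI, σ 0 = RT.T x d s'.st ∧ RT.Tb x (d - 1) σ ∉ RT.NS NextI) ↔
      (∃ σ' ∈ RT.ENS NextI, σ' 0 = RT.ET x d s' ∧
        RT.ETb x (d - 1) σ' ∉ RT.ENS NextI) :=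
  newly_possible_behaviors_correspondence_general NextI s' x d
end

section
/- Preservation of time bounds under the mapped clocks: suppose Assumption 2 holds. Let (s', t') be an AdvanceTime' step, x a clock, and b ∈ B^x(st s'). If b ≥ s'.m^x and every n ∈ relETP^x(st s') with n ≤ s'.x satisfies n ≤ s'.m^x, then t'.m^x ≤ b. -/
open scoped Classical

universe u v

/-!
After an advance step the mapped clock `t'.m^x` is the largest of `s'.m^x` and the relevant
points `≤ s'.x + 1`. Those `≤ s'.x` are at most `s'.m^x ≤ b` by hypothesis, so only `s'.x + 1`
matters, and `s'.x < b` because `b + 1` is itself a relevant point (Assumption 2).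
-/

namespace RT

variable {α : Type u} {𝒳 : Type v}

theorem EAdvanceTime.m_le_iff {B relETP : 𝒳 → RTState α 𝒳 → Set ℕ} {s' t' : RTEState α 𝒳}
    (h : EAdvanceTime B relETP s' t') (x : 𝒳) (b : ℕ) :
    t'.m x ≤ b ↔ s'.m x ≤ b ∧ ∀ n ∈ relETP x s'.st, n ≤ t'.st.clk x → n ≤ b := by
  have hbdd : BddAbove ({s'.m x} ∪ { n ∈ relETP x s'.st | n ≤ t'.st.clk x }) :=
    ⟨max (s'.m x) (t'.st.clk x), by
      rintro n (rfl | ⟨-, hn⟩)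
      exacts [le_max_left _ _, hn.trans (le_max_right _ _)]⟩
  rw [h.2 x, csSup_le_iff hbdd ⟨s'.m x, Or.inl rfl⟩]
  exact ⟨fun hle => ⟨hle _ (Or.inl rfl), fun n hn hnle => hle n (Or.inr ⟨hn, hnle⟩)⟩,
    by rintro ⟨hm, hrel⟩ n (rfl | ⟨hn, hnle⟩); exacts [hm, hrel n hn hnle]⟩

/-- `s.clk x` is not itself a bound, and a bound `b < s.clk x` is impossible: then
`b + 1 ∈ relETP` would be a point `≤ s.clk x` exceeding `m ≤ b`. -/
theorem clk_lt_of_mem_timeBound {B relETP : 𝒳 → RTState α 𝒳 → Set ℕ} {s : RTState α 𝒳}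
    {x : 𝒳} {b m : ℕ} (hnotB : s.clk x ∉ B x s) (hb : b ∈ B x s)
    (hb1 : b + 1 ∈ relETP x s) (hbm : m ≤ b)
    (hrel : ∀ n ∈ relETP x s, n ≤ s.clk x → n ≤ m) :
    s.clk x < b := by
  have hne : b ≠ s.clk x := fun he => hnotB (he ▸ hb)
  by_contra! hge
  have := hrel (b + 1) hb1 (by omega)
  omega

end RT

theorem time_bounds_preserved_under_mapped_clocks_general {α : Type u} {𝒳 : Type v}
    (NextI : RTState α 𝒳 → RTState α 𝒳 → Prop)
    (B relETP : 𝒳 → RTState α 𝒳 → Set ℕ)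
    (hA2 : ∀ (x : 𝒳) (s : RTState α 𝒳), RT.ETP NextI x s ⊆ relETP x s ∧
      { n | ∃ b ∈ B x s, n = b + 1 } ⊆ relETP x s)
    (s' t' : RTEState α 𝒳) (h : RT.EAdvanceTime B relETP s' t')
    (x : 𝒳) (b : ℕ) (hb : b ∈ B x s'.st) (hbm : s'.m x ≤ b)
    (hrel : ∀ n ∈ relETP x s'.st, n ≤ s'.st.clk x → n ≤ s'.m x) :
    t'.m x ≤ b := by
  obtain ⟨-, hclk, hnotB⟩ := h.1
  have hlt : s'.st.clk x < b :=
    RT.clk_lt_of_mem_timeBound (hnotB x) hb ((hA2 x s'.st).2 ⟨b, hb, rfl⟩) hbm hrel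
  refine (h.m_le_iff x b).2 ⟨hbm, fun n hn hnle => ?_⟩
  by_cases hn' : n ≤ s'.st.clk x
  · exact (hrel n hn hn').trans hbm
  · rw [hclk x] at hnle
    omega

theorem time_bounds_preserved_under_mapped_clocks {α : Type u} {𝒳 : Type v}
    (NextI : RTState α 𝒳 → RTState α 𝒳 → Prop)
    (B relETP : 𝒳 → RTState α 𝒳 → Set ℕ)
    (hClk : ∀ s t, NextI s t → ∀ x, t.clk x = s.clk x)
    (hA2 : ∀ (x : 𝒳) (s : RTState α 𝒳), RT.ETP NextI x s ⊆ relETP x s ∧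
      { n | ∃ b ∈ B x s, n = b + 1 } ⊆ relETP x s)
    (s' t' : RTEState α 𝒳) (h : RT.EAdvanceTime B relETP s' t')
    (x : 𝒳) (b : ℕ) (hb : b ∈ B x s'.st) (hbm : s'.m x ≤ b)
    (hrel : ∀ n ∈ relETP x s'.st, n ≤ s'.st.clk x → n ≤ s'.m x) :
    t'.m x ≤ b :=
  time_bounds_preserved_under_mapped_clocks_general NextI B relETP hA2 s' t' h x b hb hbm hrel
end

section
/- Time-advance steps are preserved by the bar projection: suppose Assumptions 2 and 3 hold. Let (s', t') be an AdvanceTime' step, and assume that for every clock x, every n ∈ relETP^x(st s') with n ≤ s'.x satisfies n ≤ s'.m^x. Then either bar(t') = bar(s'), or (bar(s'), bar(t')) is an AdvanceTime_Ŝ step. -/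
open scoped Classical

universe u v

/-! A mapped clock of an `AdvanceTime'` step either stays put or jumps to the new clock value
`s'.x + 1`, which then lies in `relETP`; this gives the `relETP` clause of `AdvanceTime_Ŝ`.
For the time-bound clause, a bound `b ≥ s'.m^x` overtaken by the jump would satisfy
`b + 1 ≤ s'.x` (as `s'.x ∉ B^x` for a time step), and `b + 1 ∈ relETP^x` by Assumption 2, so
`b + 1 ≤ s'.m^x ≤ b`. Assumption 3 transfers `B` and `relETP` between `st s'` and `bar s'`. -/

theorem Nat.sSup_singleton_union_sep_le {m k v : ℕ} {R : Set ℕ}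
    (hv : v = sSup ({m} ∪ {n ∈ R | n ≤ k})) : v = m ∨ (m < v ∧ v ∈ R ∧ v ≤ k) := by
  have hbdd : BddAbove ({m} ∪ {n ∈ R | n ≤ k}) :=
    ⟨max m k, by rintro n (rfl | ⟨_, hn⟩) <;> omega⟩
  have hle : m ≤ v := hv ▸ le_csSup hbdd (Or.inl rfl)
  rcases hv ▸ Nat.sSup_mem ⟨m, Or.inl rfl⟩ hbdd with hvm | ⟨hvR, hvk⟩
  · exact Or.inl hvm
  · exact hle.eq_or_lt.imp Eq.symm fun hlt => ⟨hlt, hvR, hvk⟩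

namespace RT

variable {α : Type u} {𝒳 : Type v} {B relETP : 𝒳 → RTState α 𝒳 → Set ℕ}
  {s' t' : RTEState α 𝒳} {x : 𝒳}

/-- By `hrel` no point of `relETP` up to the old clock value lies above the mapped clock, so
the only candidate for a new maximum is the new clock value itself. -/
theorem EAdvanceTime.m_eq_or_eq_clk_succ (h : EAdvanceTime B relETP s' t')
    (hrel : ∀ n ∈ relETP x s'.st, n ≤ s'.st.clk x → n ≤ s'.m x) :
    t'.m x = s'.m x ∨
      (s'.m x < t'.m x ∧ t'.m x ∈ relETP x s'.st ∧ t'.m x = s'.st.clk x + 1) := by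
  rcases Nat.sSup_singleton_union_sep_le (h.2 x) with hm | ⟨hlt, hR, hle⟩
  · exact Or.inl hm
  · have hnot : ¬ t'.m x ≤ s'.st.clk x := fun hle' => (hrel _ hR hle').not_gt hlt
    rw [h.1.2.1 x] at hle
    exact Or.inr ⟨hlt, hR, by omega⟩

theorem EAdvanceTime.m_le_of_mem_B (h : EAdvanceTime B relETP s' t')
    (hrel : ∀ n ∈ relETP x s'.st, n ≤ s'.st.clk x → n ≤ s'.m x)
    (hBsucc : ∀ b ∈ B x s'.st, b + 1 ∈ relETP x s'.st) {b : ℕ} (hb : b ∈ B x s'.st)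
    (hmb : s'.m x ≤ b) : t'.m x ≤ b := by
  rcases h.m_eq_or_eq_clk_succ hrel with hm | ⟨-, -, hm⟩
  · exact hm ▸ hmb
  · have hbc : b ≠ s'.st.clk x := fun hbc => h.1.2.2 x (hbc ▸ hb)
    by_contra! hgt
    have := hrel _ (hBsucc b hb) (by omega)
    omega

end RT

theorem advance_steps_preserved_by_bar_general {α : Type u} {𝒳 : Type v}
    (NextI : RTState α 𝒳 → RTState α 𝒳 → Prop)
    (B relETP : 𝒳 → RTState α 𝒳 → Set ℕ)
    (hA2 : ∀ (x : 𝒳) (s : RTState α 𝒳), RT.ETP NextI x s ⊆ relETP x s ∧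
      { n | ∃ b ∈ B x s, n = b + 1 } ⊆ relETP x s)
    (hA3 : ∀ (x : 𝒳) (s t : RTState α 𝒳), s.core = t.core →
      B x s = B x t ∧ relETP x s = relETP x t)
    (s' t' : RTEState α 𝒳) (h : RT.EAdvanceTime B relETP s' t')
    (hrel : ∀ (x : 𝒳), ∀ n ∈ relETP x s'.st, n ≤ s'.st.clk x → n ≤ s'.m x) :
    RT.bar t' = RT.bar s' ∨ RT.AdvanceTimeHat B relETP (RT.bar s') (RT.bar t') := by
  have hcore : t'.st.core = s'.st.core := h.1.1
  by_cases hall : ∀ x, t'.m x = s'.m x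
  · left
    simp only [RT.bar, hcore, funext hall]
  right
  obtain ⟨x₀, hx₀⟩ := not_forall.mp hall
  have hBar x := hA3 x (RT.bar s') s'.st rfl
  refine ⟨hcore, ⟨x₀, ?_⟩, fun x => ?_, fun x b hb hmb => ?_⟩
  · exact ((h.m_eq_or_eq_clk_succ (hrel x₀)).resolve_left hx₀).1
  · rw [(hBar x).2]
    exact (h.m_eq_or_eq_clk_succ (hrel x)).imp id fun ⟨hlt, hR, _⟩ => ⟨hlt, hR⟩
  · rw [(hBar x).1] at hb
    exact h.m_le_of_mem_B (hrel x) (fun b hb => (hA2 x s'.st).2 ⟨b, hb, rfl⟩) hb hmb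

theorem advance_steps_preserved_by_bar {α : Type u} {𝒳 : Type v}
    (NextI : RTState α 𝒳 → RTState α 𝒳 → Prop)
    (B relETP : 𝒳 → RTState α 𝒳 → Set ℕ)
    (hClk : ∀ s t, NextI s t → ∀ x, t.clk x = s.clk x)
    (hA2 : ∀ (x : 𝒳) (s : RTState α 𝒳), RT.ETP NextI x s ⊆ relETP x s ∧
      { n | ∃ b ∈ B x s, n = b + 1 } ⊆ relETP x s)
    (hA3 : ∀ (x : 𝒳) (s t : RTState α 𝒳), s.core = t.core →
      B x s = B x t ∧ relETP x s = relETP x t)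
    (s' t' : RTEState α 𝒳) (h : RT.EAdvanceTime B relETP s' t')
    (hrel : ∀ (x : 𝒳), ∀ n ∈ relETP x s'.st, n ≤ s'.st.clk x → n ≤ s'.m x) :
    RT.bar t' = RT.bar s' ∨ RT.AdvanceTimeHat B relETP (RT.bar s') (RT.bar t') :=
  advance_steps_preserved_by_bar_general NextI B relETP hA2 hA3 s' t' h hrel
end

section
/- Mapped clocks never exceed the actual clocks: every reachable extended state s' satisfies s'.m^x ≤ s'.x for every clock x. -/
open scoped Classical

universe u v

namespace RT

variable {α : Type u} {𝒳 : Type v}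

def MappedLeClk (s' : RTEState α 𝒳) : Prop :=
  ∀ x, s'.m x ≤ s'.st.clk x

theorem mappedLeClk_of_mem_EInit {Init : Set (RTState α 𝒳)} {s' : RTEState α 𝒳}
    (hs : s' ∈ EInit Init) : MappedLeClk s' :=
  fun x => (hs.2 x).le

theorem MappedLeClk.eNextI {NextI : RTState α 𝒳 → RTState α 𝒳 → Prop}
    (hClk : ∀ s t, NextI s t → ∀ x, t.clk x = s.clk x) {s' t' : RTEState α 𝒳}
    (hs : MappedLeClk s') (hst : ENextI NextI s' t') : MappedLeClk t' := fun x => by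
  rw [hst.2 x, hClk _ _ hst.1 x]
  exact hs x

theorem MappedLeClk.eAdvanceTime {B relETP : 𝒳 → RTState α 𝒳 → Set ℕ}
    {s' t' : RTEState α 𝒳} (hs : MappedLeClk s') (hst : EAdvanceTime B relETP s' t') :
    MappedLeClk t' := fun x => by
  have hadv : s'.st.clk x ≤ t'.st.clk x := by rw [hst.1.2.1 x]; exact Nat.le_succ _
  rw [hst.2 x]
  refine csSup_le' ?_
  rintro n (rfl | ⟨-, hn⟩)
  · exact (hs x).trans hadv
  · exact hn

theorem MappedLeClk.eStep {NextI : RTState α 𝒳 → RTState α 𝒳 → Prop}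
    {B relETP : 𝒳 → RTState α 𝒳 → Set ℕ}
    (hClk : ∀ s t, NextI s t → ∀ x, t.clk x = s.clk x) {s' t' : RTEState α 𝒳}
    (hs : MappedLeClk s') (hst : EStep NextI B relETP s' t') : MappedLeClk t' := by
  rcases hst with hnext | hadv | rfl
  · exact hs.eNextI hClk hnext
  · exact hs.eAdvanceTime hadv
  · exact hs

end RT

theorem mapped_clocks_le_actual_clocks {α : Type u} {𝒳 : Type v}
    (Init : Set (RTState α 𝒳)) (NextI : RTState α 𝒳 → RTState α 𝒳 → Prop)
    (B relETP : 𝒳 → RTState α 𝒳 → Set ℕ)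
    (hClk : ∀ s t, NextI s t → ∀ x, t.clk x = s.clk x)
    (s' : RTEState α 𝒳) (h : RT.EReachable Init NextI B relETP s') :
    ∀ x, s'.m x ≤ s'.st.clk x := by
  obtain ⟨i, hi, hsteps⟩ := h
  induction hsteps with
  | refl => exact RT.mappedLeClk_of_mem_EInit hi
  | tail _ hstep ih => exact RT.MappedLeClk.eStep hClk ih hstep
end
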